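/- Elementary lower barrier for the discrete maximal sum: let 0 < λ ≤ 1 and L > 1/λ, let j ∈ ℕ₀, and let (λ_u)_{u∈ℤ} be a finitely supported sequence of nonnegative reals. Then for every x ∈ ℝ, ∑_{u∈ℤ} λ_u (1 + 2^j |x - 2πu/2^j|)^{-L} ≤ C [ M( ∑_u λ_u^λ χ_{j,u} )(x) ]^{1/λ}, where χ_{j,u} is the indicator of the interval [2πu/2^j, 2π(u+1)/2^j] and M is the Hardy–Littlewood maximal operator, with C independent of j, (λ_u), and x. -/

import Mathlib

open Real MeasureTheory intervalIntegral

/-- The (uncentered-over-symmetric-intervals) Hardy–Littlewood maximal operator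
`M g(x) = sup_{r>0} (1/(2r)) ∫_{x-r}^{x+r} |g|`. -/
noncomputable def hlMax (g : ℝ → ℝ) (x : ℝ) : ℝ :=
  ⨆ r : {r : ℝ // 0 < r}, (1 / (2 * r.1)) * ∫ y in (x - r.1)..(x + r.1), |g y|

/-!
Since `t ↦ t ^ λ` is subadditive for `λ ≤ 1`, it suffices to bound `∑ c_u^λ a_u^(-Lλ)`, where
`a_u = 1 + 2^j |x - 2πu/2^j|`. The grid intervals with `a_u ≤ A` lie in the interval of radius
`2πA/2^j` about `x`, so their weights `c_u^λ` sum to at most `2A · M g(x)` with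
`g = ∑ c_u^λ χ_{j,u}`. Summing over the dyadic shells `2^k ≤ a_u < 2^(k+1)` then gives a geometric
series of ratio `2^(1 - Lλ) < 1`.
-/

open Finset

lemma rpow_finset_sum_le_sum_rpow {ι : Type*} (s : Finset ι) {f : ι → ℝ}
    (hf : ∀ i ∈ s, 0 ≤ f i) {p : ℝ} (hp0 : 0 < p) (hp1 : p ≤ 1) :
    (∑ i ∈ s, f i) ^ p ≤ ∑ i ∈ s, f i ^ p :=
  le_sum_of_subadditive_on_pred (· ^ p) (0 ≤ ·) (by simp [Real.zero_rpow hp0.ne'])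
    (fun _ _ hx hy => Real.rpow_add_le_add_rpow hx hy hp0.le hp1) (fun _ _ => add_nonneg) f hf

lemma sum_mul_rpow_neg_le_of_sum_sublevel_le {ι : Type*} (s : Finset ι) {w a : ι → ℝ}
    {P M : ℝ} (hP : 1 < P) (hw : ∀ i ∈ s, 0 ≤ w i) (ha : ∀ i ∈ s, 1 ≤ a i)
    (hM : ∀ A, 1 ≤ A → ∑ i ∈ s with a i ≤ A, w i ≤ A * M) :
    ∑ i ∈ s, w i * a i ^ (-P) ≤ 2 * M * (1 - 2 ^ (1 - P))⁻¹ := by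
  set ρ : ℝ := 2 ^ (1 - P) with hρ
  have hρ_eq : ρ = 2 * 2 ^ (-P) := by
    rw [hρ, sub_eq_add_neg, Real.rpow_add zero_lt_two, Real.rpow_one]
  have hρ0 : 0 ≤ ρ := by positivity
  have hρ1 : ρ < 1 := Real.rpow_lt_one_of_one_lt_of_neg one_lt_two (by linarith)
  have hM0 : 0 ≤ M := by
    simpa using (sum_nonneg fun i hi => hw i (mem_filter.1 hi).1).trans (hM 1 le_rfl)
  set shell : ι → ℕ := fun i => Nat.log 2 ⌊a i⌋₊
  have two_pow_shell_le : ∀ i ∈ s, (2 : ℝ) ^ shell i ≤ a i := fun i hi =>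
    calc (2 : ℝ) ^ shell i ≤ ⌊a i⌋₊ := by
          exact_mod_cast Nat.pow_log_le_self 2 (Nat.floor_pos.2 (ha i hi)).ne'
      _ ≤ a i := Nat.floor_le (by linarith [ha i hi])
  have le_two_pow_shell_succ : ∀ i, a i ≤ 2 ^ (shell i + 1) := fun i =>
    calc a i ≤ ⌊a i⌋₊ + 1 := (Nat.lt_floor_add_one _).le
      _ ≤ 2 ^ (shell i + 1) := by exact_mod_cast Nat.lt_pow_succ_log_self one_lt_two _
  have shell_sum_le : ∀ k, ∑ i ∈ s with shell i = k, w i * a i ^ (-P) ≤ 2 * M * ρ ^ k := by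
    intro k
    calc ∑ i ∈ s with shell i = k, w i * a i ^ (-P)
        ≤ ∑ i ∈ s with shell i = k, w i * (2 ^ (-P)) ^ k := by
          refine sum_le_sum fun i hi => ?_
          obtain ⟨his, rfl⟩ := mem_filter.1 hi
          rw [Real.rpow_pow_comm zero_le_two]
          exact mul_le_mul_of_nonneg_left (Real.rpow_le_rpow_of_nonpos (by positivity)
            (two_pow_shell_le i his) (by linarith)) (hw i his)
      _ = (2 ^ (-P)) ^ k * ∑ i ∈ s with shell i = k, w i := by rw [mul_sum]; simp_rw [mul_comm]
      _ ≤ (2 ^ (-P)) ^ k * ∑ i ∈ s with a i ≤ 2 ^ (k + 1), w i := by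
          gcongr with i
          · exact fun i hi _ => hw i (mem_filter.1 hi).1
          · exact fun hik => hik ▸ le_two_pow_shell_succ i
      _ ≤ (2 ^ (-P)) ^ k * (2 ^ (k + 1) * M) := by gcongr; exact hM _ (one_le_pow₀ one_le_two)
      _ = 2 * M * ρ ^ k := by rw [hρ_eq]; ring
  calc ∑ i ∈ s, w i * a i ^ (-P)
      = ∑ k ∈ s.image shell, ∑ i ∈ s with shell i = k, w i * a i ^ (-P) :=
        (sum_fiberwise_of_maps_to (fun i hi => mem_image_of_mem shell hi) _).symm
    _ ≤ ∑ k ∈ s.image shell, 2 * M * ρ ^ k := sum_le_sum fun k _ => shell_sum_le k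
    _ = 2 * M * ∑ k ∈ s.image shell, ρ ^ k := (mul_sum ..).symm
    _ ≤ 2 * M * (1 - ρ)⁻¹ := by
        gcongr
        rw [← tsum_geometric_of_lt_one hρ0 hρ1]
        exact (summable_geometric_of_lt_one hρ0 hρ1).sum_le_tsum _ fun k _ => by positivity

lemma hlMax_nonneg (g : ℝ → ℝ) (x : ℝ) : 0 ≤ hlMax g x :=
  Real.iSup_nonneg fun r => mul_nonneg (by have := r.2; positivity)
    (intervalIntegral.integral_nonneg (by linarith [r.2]) fun _ _ => abs_nonneg _)

lemma integral_le_two_mul_mul_hlMax {g : ℝ → ℝ} {B : ℝ} (hg0 : ∀ y, 0 ≤ g y)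
    (hgB : ∀ y, g y ≤ B) (x : ℝ) {r : ℝ} (hr : 0 < r) :
    ∫ y in (x - r)..(x + r), g y ≤ 2 * r * hlMax g x := by
  have habs : ∀ r : ℝ, ∫ y in (x - r)..(x + r), |g y| = ∫ y in (x - r)..(x + r), g y :=
    fun r => intervalIntegral.integral_congr fun y _ => abs_of_nonneg (hg0 y)
  have hbdd : BddAbove (Set.range fun r : {r : ℝ // 0 < r} =>
      (1 / (2 * r.1)) * ∫ y in (x - r.1)..(x + r.1), |g y|) := by
    refine ⟨B, ?_⟩
    rintro _ ⟨⟨r, hr⟩, rfl⟩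
    have hint := intervalIntegral.norm_integral_le_of_norm_le_const (a := x - r) (b := x + r)
      (fun y _ => (Real.norm_of_nonneg (hg0 y)).trans_le (hgB y))
    rw [Real.norm_of_nonneg (intervalIntegral.integral_nonneg (by linarith) fun y _ => hg0 y),
      show x + r - (x - r) = 2 * r by ring, abs_of_pos (by linarith)] at hint
    simp only [habs, one_div]
    rw [inv_mul_le_iff₀ (by positivity)]
    linarith
  have := le_ciSup hbdd ⟨r, hr⟩
  rw [habs r, one_div, inv_mul_le_iff₀ (by positivity)] at this
  exact this

open scoped Classical in
lemma sum_mul_measureReal_le_setIntegral {α ι : Type*} [MeasurableSpace α] {μ : Measure α}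
    (s : Finset ι) {w : ι → ℝ} (hw : ∀ i ∈ s, 0 ≤ w i) {E : ι → Set α}
    (hE : ∀ i, MeasurableSet (E i)) (hμE : ∀ i, μ (E i) ≠ ⊤) (U : Set α) :
    ∑ i ∈ s with E i ⊆ U, w i * μ.real (E i) ≤
      ∫ y in U, ∑ i ∈ s, w i * (E i).indicator 1 y ∂μ := by
  have hint : ∀ i, Integrable (fun y => w i * (E i).indicator 1 y) (μ.restrict U) := fun i =>
    ((integrable_indicator_iff (hE i)).2 (integrableOn_const
      ((Measure.restrict_apply_le _ _).trans_lt (hμE i).lt_top).ne)).const_mul _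
  calc ∑ i ∈ s with E i ⊆ U, w i * μ.real (E i)
      = ∫ y in U, ∑ i ∈ s with E i ⊆ U, w i * (E i).indicator 1 y ∂μ := by
        rw [integral_finsetSum _ fun i _ => hint i]
        refine sum_congr rfl fun i hi => ?_
        rw [MeasureTheory.integral_const_mul, integral_indicator_one (hE i),
          measureReal_restrict_apply (hE i), Set.inter_eq_left.2 (mem_filter.1 hi).2]
    _ ≤ ∫ y in U, ∑ i ∈ s, w i * (E i).indicator 1 y ∂μ :=
        integral_mono (integrable_finsetSum _ fun i _ => hint i)
          (integrable_finsetSum _ fun i _ => hint i) fun y =>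
            sum_le_sum_of_subset_of_nonneg (filter_subset _ _) fun i hi _ =>
              mul_nonneg (hw i hi) (Set.indicator_nonneg (fun _ _ => zero_le_one) y)

def gridInterval (j : ℕ) (u : ℤ) : Set ℝ :=
  Set.Icc (2 * π * u / 2 ^ j) (2 * π * (u + 1) / 2 ^ j)

lemma gridInterval_subset_Ioc {j : ℕ} {u : ℤ} {x A : ℝ}
    (hu : 1 + 2 ^ j * |x - 2 * π * u / 2 ^ j| ≤ A) :
    gridInterval j u ⊆ Set.Ioc (x - A * (2 * π / 2 ^ j)) (x + A * (2 * π / 2 ^ j)) := by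
  set h : ℝ := 2 * π / 2 ^ j
  have hdist : |x - 2 * π * u / 2 ^ j| ≤ (A - 1) * h := by
    have hA : 0 ≤ A - 1 := by
      nlinarith [abs_nonneg (x - 2 * π * u / 2 ^ j), pow_pos (two_pos : (0 : ℝ) < 2) j]
    rw [← mul_le_mul_iff_of_pos_left (pow_pos (two_pos : (0 : ℝ) < 2) j)]
    calc (2 : ℝ) ^ j * |x - 2 * π * u / 2 ^ j| ≤ (A - 1) * 1 := by linarith
      _ ≤ (A - 1) * (2 * π) := by gcongr; linarith [pi_gt_three]
      _ = 2 ^ j * ((A - 1) * h) := by simp only [h]; field_simp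
  have hend : 2 * π * (u + 1) / 2 ^ j = 2 * π * u / 2 ^ j + h := by ring
  have hh : 0 < h := by positivity
  rintro y ⟨hy₁, hy₂⟩
  rw [hend] at hy₂
  obtain ⟨hl, hr⟩ := abs_le.1 hdist
  constructor <;> nlinarith

lemma volume_real_gridInterval (j : ℕ) (u : ℤ) :
    volume.real (gridInterval j u) = 2 * π / 2 ^ j := by
  rw [gridInterval, Real.volume_real_Icc_of_le (by gcongr; linarith)]
  ring

lemma sum_sublevel_le_mul_hlMax (j : ℕ) (s : Finset ℤ) {w : ℤ → ℝ} (hw : ∀ u ∈ s, 0 ≤ w u)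
    (x : ℝ) {A : ℝ} (hA : 1 ≤ A) :
    ∑ u ∈ s with 1 + 2 ^ j * |x - 2 * π * (u : ℤ) / 2 ^ j| ≤ A, w u ≤
      A * (2 * hlMax (fun y => ∑ u ∈ s, w u * (gridInterval j u).indicator 1 y) x) := by
  classical
  set h : ℝ := 2 * π / 2 ^ j
  have hh : 0 < h := by positivity
  set g := fun y => ∑ u ∈ s, w u * (gridInterval j u).indicator 1 y
  have hg0 : ∀ y, 0 ≤ g y := fun y => sum_nonneg fun u hu =>
    mul_nonneg (hw u hu) (Set.indicator_nonneg (fun _ _ => zero_le_one) y)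
  have hgB : ∀ y, g y ≤ ∑ u ∈ s, w u := fun y => sum_le_sum fun u hu =>
    mul_le_of_le_one_right (hw u hu) (Set.indicator_le_self' (fun _ _ => zero_le_one) y)
  have hint := sum_mul_measureReal_le_setIntegral (μ := volume) (E := gridInterval j) s hw
    (fun _ => measurableSet_Icc) (fun _ => measure_Icc_lt_top.ne)
    (Set.Ioc (x - A * h) (x + A * h))
  rw [← intervalIntegral.integral_of_le (by nlinarith)] at hint
  refine le_of_mul_le_mul_left ?_ hh
  calc h * ∑ u ∈ s with 1 + 2 ^ j * |x - 2 * π * (u : ℤ) / 2 ^ j| ≤ A, w u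
      = ∑ u ∈ s with 1 + 2 ^ j * |x - 2 * π * (u : ℤ) / 2 ^ j| ≤ A,
          w u * volume.real (gridInterval j u) := by
        simp only [mul_sum, volume_real_gridInterval, h, mul_comm]
    _ ≤ ∑ u ∈ s with gridInterval j u ⊆ Set.Ioc (x - A * h) (x + A * h),
          w u * volume.real (gridInterval j u) :=
        sum_le_sum_of_subset_of_nonneg
          (monotone_filter_right s fun _ _ => gridInterval_subset_Ioc)
          fun u hu _ => mul_nonneg (hw u (mem_filter.1 hu).1) measureReal_nonneg
    _ ≤ ∫ y in (x - A * h)..(x + A * h), g y := hint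
    _ ≤ 2 * (A * h) * hlMax g x := integral_le_two_mul_mul_hlMax hg0 hgB x (by positivity)
    _ = h * (A * (2 * hlMax g x)) := by ring

theorem kyriazis_maximal_bound (lam L : ℝ) (hlam0 : 0 < lam) (hlam1 : lam ≤ 1)
    (hL : 1 / lam < L) :
    ∃ C > (0 : ℝ), ∀ (j : ℕ) (c : ℤ → ℝ) (x : ℝ),
      (∀ u : ℤ, 0 ≤ c u) → (Function.support c).Finite →
      (∑' u : ℤ, c u * (1 + 2 ^ j * |x - 2 * Real.pi * u / 2 ^ j|) ^ (-L))
        ≤ C * (hlMax (fun y => ∑' u : ℤ,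
              c u ^ lam *
                Set.indicator (Set.Icc (2 * Real.pi * u / 2 ^ j)
                  (2 * Real.pi * (u + 1) / 2 ^ j)) 1 y) x) ^ (1 / lam) := by
  have hP : 1 < L * lam := (div_lt_iff₀ hlam0).1 hL
  set K : ℝ := 4 * (1 - 2 ^ (1 - L * lam))⁻¹
  have hK : 0 < K := by
    have : (2 : ℝ) ^ (1 - L * lam) < 1 :=
      Real.rpow_lt_one_of_one_lt_of_neg one_lt_two (by linarith)
    have : 0 < 1 - (2 : ℝ) ^ (1 - L * lam) := by linarith
    positivity
  refine ⟨K ^ (1 / lam), by positivity, fun j c x hc hfin => ?_⟩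
  set s := hfin.toFinset
  have hcs : ∀ u ∉ s, c u = 0 := fun u hu => by simpa [s] using hu
  set a : ℤ → ℝ := fun u => 1 + 2 ^ j * |x - 2 * π * u / 2 ^ j|
  have ha : ∀ u, 1 ≤ a u := fun u => le_add_of_nonneg_right (by positivity)
  set g := fun y => ∑ u ∈ s, c u ^ lam * (gridInterval j u).indicator 1 y
  have hg : (fun y => ∑' u : ℤ, c u ^ lam * (gridInterval j u).indicator 1 y) = g :=
    funext fun y => tsum_eq_sum fun u hu => by rw [hcs u hu, Real.zero_rpow hlam0.ne', zero_mul]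
  have hterm : ∀ u, 0 ≤ c u * a u ^ (-L) := fun u => mul_nonneg (hc u) (by positivity)
  have hS : (∑ u ∈ s, c u * a u ^ (-L)) ^ lam ≤ K * hlMax g x :=
    calc (∑ u ∈ s, c u * a u ^ (-L)) ^ lam ≤ ∑ u ∈ s, (c u * a u ^ (-L)) ^ lam :=
          rpow_finset_sum_le_sum_rpow s (fun u _ => hterm u) hlam0 hlam1
      _ = ∑ u ∈ s, c u ^ lam * a u ^ (-(L * lam)) := sum_congr rfl fun u _ => by
          rw [Real.mul_rpow (hc u) (by positivity), ← Real.rpow_mul (by positivity), neg_mul]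
      _ ≤ 2 * (2 * hlMax g x) * (1 - 2 ^ (1 - L * lam))⁻¹ :=
          sum_mul_rpow_neg_le_of_sum_sublevel_le s hP (fun u _ => Real.rpow_nonneg (hc u) _)
            (fun u _ => ha u) fun _ hA => sum_sublevel_le_mul_hlMax j s
              (fun u _ => Real.rpow_nonneg (hc u) _) x hA
      _ = K * hlMax g x := by ring
  rw [tsum_eq_sum (s := s) fun u hu => by rw [hcs u hu, zero_mul]]
  simp only [← gridInterval.eq_1, hg]
  rw [← Real.mul_rpow hK.le (hlMax_nonneg g x), one_div,
    Real.le_rpow_inv_iff_of_pos (sum_nonneg fun u _ => hterm u)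
      (mul_nonneg hK.le (hlMax_nonneg g x)) hlam0]
  exact hS
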